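/- For every n ≥ 0, let Q_n be the grid graph on vertex set [0, n]² ⊆ ℤ², and let ρ ∈ (0,1) be a real number. Define the activator sequence v by v₀ = (0,0) and, for n ≥ 1, v_n = (⌊ρn⌋, n) if ⌊ρn⌋ − ⌊ρ(n−1)⌋ = 1, and v_n = • if ⌊ρn⌋ − ⌊ρ(n−1)⌋ = 0. Then the burning density δ(Q, v) exists and equals (1+ρ)/2. -/

import Mathlib

open Filter Topology

namespace Burning

/-- Points of the `d`-dimensional integer lattice. -/
abbrev Pt (d : ℕ) := Fin d → ℤ

/-- The `L1`-distance between two lattice points. -/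
def dist1 {d : ℕ} (x y : Pt d) : ℤ := ∑ i, |x i - y i|

/-- The `L1`-norm of a lattice point. -/
def norm1 {d : ℕ} (x : Pt d) : ℤ := ∑ i, |x i|

/-- The closed neighbourhood of the set `B` in the grid graph on the vertex set `Vn`
(two vertices adjacent iff at `L1`-distance `1`). -/
def nbhd {d : ℕ} (Vn : Set (Pt d)) (B : Set (Pt d)) : Set (Pt d) :=
  B ∪ {x | x ∈ Vn ∧ ∃ b ∈ B, dist1 x b = 1}

/-- The burned sets of the activator sequence `v` in the sequence of grid graphs on the
vertex sets `V n`; `v n = none` means no vertex is activated at time `n` (the symbol `•`). -/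
def burnSet {d : ℕ} (V : ℕ → Set (Pt d)) (v : ℕ → Option (Pt d)) : ℕ → Set (Pt d)
  | 0 => (v 0).elim ∅ (fun x => {x})
  | n + 1 => nbhd (V (n + 1)) (burnSet V v n) ∪ (v (n + 1)).elim ∅ (fun x => {x})

/-- `v` is an activator sequence for the vertex sets `V`: every activated vertex is a
vertex of the current graph. -/
def IsActivator {d : ℕ} (V : ℕ → Set (Pt d)) (v : ℕ → Option (Pt d)) : Prop :=
  ∀ n x, v n = some x → x ∈ V n

/-- `v` is a valid activator sequence: each newly activated vertex lies in the current
vertex set and is not already burned at the current step. -/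
def IsValid {d : ℕ} (V : ℕ → Set (Pt d)) (v : ℕ → Option (Pt d)) : Prop :=
  ∀ n x, v (n + 1) = some x →
    x ∈ V (n + 1) ∧ x ∉ nbhd (V (n + 1)) (burnSet V v n)

/-- The proportion of burned vertices at time `n`. -/
noncomputable def densitySeq {d : ℕ} (V : ℕ → Set (Pt d)) (v : ℕ → Option (Pt d))
    (n : ℕ) : ℝ :=
  ((burnSet V v n).ncard : ℝ) / ((V n).ncard : ℝ)

/-- The closed `L1`-ball of radius `r` centred at `P`. -/
def ball1 {d : ℕ} (P : Pt d) (r : ℤ) : Set (Pt d) := {x | norm1 (x - P) ≤ r}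

/-- The `L1`-sphere of radius `r` centred at `P`. -/
def sphere1 {d : ℕ} (P : Pt d) (r : ℤ) : Set (Pt d) := {x | norm1 (x - P) = r}

/-- The square grid `[-a, a]² ⊆ ℤ²`. -/
def sqGrid (a : ℤ) : Set (Pt 2) := {x | ∀ i, |x i| ≤ a}

/-- The cube grid `[-a, a]^d ⊆ ℤ^d`. -/
def cubeGrid (d : ℕ) (a : ℤ) : Set (Pt d) := {x | ∀ i, |x i| ≤ a}

/-- The quadrant grid `[0, a]² ⊆ ℤ²`. -/
def quadGrid (a : ℤ) : Set (Pt 2) := {x | ∀ i, 0 ≤ x i ∧ x i ≤ a}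

end Burning


section BurnAux

open Burning Finset

noncomputable def fz (ρ : ℝ) (b : ℤ) : ℤ := ⌊ρ * b⌋

def Sset (ρ : ℝ) (n : ℕ) : Set (Pt 2) :=
  {x | 0 ≤ x 0 ∧ 0 ≤ x 1 ∧ x 1 ≤ (n:ℤ) ∧ x 0 ≤ (n:ℤ) - x 1 + fz ρ (x 1)}

lemma fz_zero (ρ : ℝ) : fz ρ 0 = 0 := by simp [fz]

lemma fz_nonneg {ρ : ℝ} (hρ₁ : 0 < ρ) {b : ℤ} (hb : 0 ≤ b) : 0 ≤ fz ρ b := by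
  apply Int.floor_nonneg.2; positivity

lemma fz_mono {ρ : ℝ} (hρ₁ : 0 < ρ) {b c : ℤ} (h : b ≤ c) : fz ρ b ≤ fz ρ c := by
  apply Int.floor_le_floor
  have : (b:ℝ) ≤ c := by exact_mod_cast h
  nlinarith

lemma fz_le {ρ : ℝ} (hρ₂ : ρ < 1) {b : ℤ} (hb : 0 ≤ b) : fz ρ b ≤ b := by
  have : (0:ℝ) ≤ b := by exact_mod_cast hb
  calc fz ρ b ≤ ⌊(b:ℝ)⌋ := Int.floor_le_floor (by nlinarith)
  _ = b := Int.floor_intCast b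

lemma fz_step {ρ : ℝ} (hρ₂ : ρ < 1) (b : ℤ) : fz ρ (b + 1) ≤ fz ρ b + 1 := by
  unfold fz
  have h1 : ((b + 1 : ℤ) : ℝ) = (b : ℝ) + 1 := by push_cast; ring
  rw [h1]
  calc ⌊ρ * ((b:ℝ) + 1)⌋ ≤ ⌊ρ * b + 1⌋ := Int.floor_le_floor (by nlinarith)
  _ = ⌊ρ * b⌋ + 1 := by rw [Int.floor_add_one]

lemma dist1_two (x y : Pt 2) : dist1 x y = |x 0 - y 0| + |x 1 - y 1| := by
  simp [dist1, Fin.sum_univ_two]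

lemma mem_quadGrid {a : ℤ} {x : Pt 2} :
    x ∈ quadGrid a ↔ 0 ≤ x 0 ∧ x 0 ≤ a ∧ 0 ≤ x 1 ∧ x 1 ≤ a := by
  simp only [quadGrid, Set.mem_setOf_eq, Fin.forall_fin_two]
  tauto

lemma step_eq {ρ : ℝ} (hρ₁ : 0 < ρ) (hρ₂ : ρ < 1) (n : ℕ) (w : Option (Pt 2))
    (hw : w = if fz ρ ((n:ℤ)+1) - fz ρ (n:ℤ) = 1
        then some ![fz ρ ((n:ℤ)+1), (n:ℤ)+1] else none) :
    nbhd (quadGrid ((n:ℤ)+1)) (Sset ρ n) ∪ w.elim ∅ (fun x => {x}) = Sset ρ (n+1) := by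
  set m : ℤ := (n:ℤ) with hm
  have hm0 : 0 ≤ m := Int.natCast_nonneg n
  ext x
  simp only [nbhd, Set.mem_union, Set.mem_setOf_eq, Sset, mem_quadGrid]
  push_cast
  constructor
  · rintro ((⟨h0, h1, h2, h3⟩ | ⟨⟨q0, q1, q2, q3⟩, y, ⟨g0, g1, g2, g3⟩, hd⟩) | hact)
    · exact ⟨h0, h1, by linarith, by linarith⟩
    · rw [dist1_two] at hd
      have hcases : (x 0 = y 0 + 1 ∧ x 1 = y 1) ∨ (x 0 = y 0 - 1 ∧ x 1 = y 1) ∨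
          (x 0 = y 0 ∧ x 1 = y 1 + 1) ∨ (x 0 = y 0 ∧ x 1 = y 1 - 1) := by
        rcases abs_cases (x 0 - y 0) with ⟨e1, s1⟩ | ⟨e1, s1⟩ <;>
          rcases abs_cases (x 1 - y 1) with ⟨e2, s2⟩ | ⟨e2, s2⟩ <;>
          rw [e1, e2] at hd <;> omega
      refine ⟨q0, q2, ?_, ?_⟩
      · rcases hcases with ⟨_, h⟩ | ⟨_, h⟩ | ⟨_, h⟩ | ⟨_, h⟩ <;> rw [h] <;> linarith
      · rcases hcases with ⟨h, h'⟩ | ⟨h, h'⟩ | ⟨h, h'⟩ | ⟨h, h'⟩ <;> rw [h, h']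
        · linarith
        · linarith
        · have := fz_mono hρ₁ (le_of_lt (lt_add_one (y 1)))
          linarith
        · have h2 := fz_step hρ₂ (y 1 - 1)
          have h3 : y 1 - 1 + 1 = y 1 := by ring
          rw [h3] at h2
          linarith
    · rw [hw] at hact
      by_cases hif : fz ρ (m+1) - fz ρ m = 1
      · rw [if_pos hif] at hact
        simp only [Option.elim_some, Set.mem_singleton_iff] at hact
        subst hact
        have hf0 : 0 ≤ fz ρ (m+1) := fz_nonneg hρ₁ (by linarith)
        simp only [Matrix.cons_val_zero, Matrix.cons_val_one, Matrix.head_cons]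
        exact ⟨hf0, by linarith, le_refl _, by linarith⟩
      · rw [if_neg hif] at hact
        simp at hact
  · rintro ⟨h0, h1, h2, h3⟩
    by_cases hbn : x 1 ≤ m
    · by_cases hin : x 0 ≤ m - x 1 + fz ρ (x 1)
      · exact Or.inl (Or.inl ⟨h0, h1, hbn, hin⟩)
      · push_neg at hin
        have hfb0 : 0 ≤ fz ρ (x 1) := fz_nonneg hρ₁ h1
        have hfble : fz ρ (x 1) ≤ x 1 := fz_le hρ₂ h1
        refine Or.inl (Or.inr ⟨⟨h0, by linarith, h1, by linarith⟩,
          ![x 0 - 1, x 1], ⟨?_, ?_, ?_, ?_⟩, ?_⟩) <;>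
          try simp only [Matrix.cons_val_zero, Matrix.cons_val_one, Matrix.head_cons]
        · linarith
        · exact h1
        · exact hbn
        · linarith
        · rw [dist1_two]
          simp only [Matrix.cons_val_zero, Matrix.cons_val_one, Matrix.head_cons]
          rw [show x 0 - (x 0 - 1) = 1 by ring, show x 1 - x 1 = 0 by ring]
          simp
    · have hb : x 1 = m + 1 := by omega
      have hstep := fz_step hρ₂ m
      have hmono := fz_mono hρ₁ (le_of_lt (lt_add_one m))
      have h4 : x 0 ≤ fz ρ (m+1) := by rw [hb] at h3; linarith
      by_cases han : x 0 ≤ fz ρ m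
      · have hfm : fz ρ m ≤ m := fz_le hρ₂ hm0
        refine Or.inl (Or.inr ⟨⟨h0, by linarith, h1, by linarith⟩,
          ![x 0, m], ⟨?_, ?_, ?_, ?_⟩, ?_⟩) <;>
          try simp only [Matrix.cons_val_zero, Matrix.cons_val_one, Matrix.head_cons]
        · exact h0
        · exact hm0
        · exact le_refl m
        · linarith
        · rw [dist1_two]
          simp only [Matrix.cons_val_zero, Matrix.cons_val_one, Matrix.head_cons]
          rw [show x 0 - x 0 = 0 by ring, hb, show m + 1 - m = 1 by ring]
          simp
      · push_neg at han
        have ha : x 0 = fz ρ m + 1 := by omega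
        have hif : fz ρ (m+1) - fz ρ m = 1 := by omega
        right
        rw [hw, if_pos hif]
        simp only [Option.elim_some, Set.mem_singleton_iff]
        funext i
        fin_cases i
        · show x 0 = fz ρ (m+1)
          omega
        · show x 1 = m + 1
          exact hb

lemma burn_eq {ρ : ℝ} (hρ₁ : 0 < ρ) (hρ₂ : ρ < 1)
    (V : ℕ → Set (Pt 2)) (hV : ∀ n : ℕ, V n = quadGrid n)
    (v : ℕ → Option (Pt 2)) (hv0 : v 0 = some 0)
    (hv : ∀ n : ℕ, 1 ≤ n →
      v n = if ⌊ρ * n⌋ - ⌊ρ * ((n : ℝ) - 1)⌋ = 1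
        then some ![⌊ρ * n⌋, (n : ℤ)] else none) :
    ∀ n, burnSet V v n = Sset ρ n := by
  intro n
  induction n with
  | zero =>
    show (v 0).elim ∅ (fun x => {x}) = Sset ρ 0
    rw [hv0]
    ext x
    simp only [Option.elim_some, Set.mem_singleton_iff, Sset, Set.mem_setOf_eq,
      Nat.cast_zero]
    constructor
    · rintro rfl
      simp [fz_zero]
    · rintro ⟨h0, h1, h2, h3⟩
      have hx1 : x 1 = 0 := le_antisymm h2 h1
      rw [hx1, fz_zero] at h3
      have hx0 : x 0 = 0 := le_antisymm (by linarith) h0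
      funext i
      fin_cases i
      · exact hx0
      · exact hx1
  | succ n ih =>
    have key : v (n+1) = if fz ρ ((n:ℤ)+1) - fz ρ (n:ℤ) = 1
        then some ![fz ρ ((n:ℤ)+1), (n:ℤ)+1] else none := by
      rw [hv (n+1) (Nat.le_add_left 1 n)]
      have e1 : ⌊ρ * ((n+1:ℕ):ℝ)⌋ = fz ρ ((n:ℤ)+1) := by
        unfold fz; push_cast; ring_nf
      have e2 : ⌊ρ * (((n+1:ℕ):ℝ) - 1)⌋ = fz ρ (n:ℤ) := by
        unfold fz; push_cast; ring_nf
      rw [e1, e2]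
      norm_cast
    show nbhd (V (n+1)) (burnSet V v n) ∪ (v (n+1)).elim ∅ (fun x => {x}) = Sset ρ (n+1)
    rw [ih, hV (n+1), show ((n+1:ℕ):ℤ) = (n:ℤ)+1 by push_cast; ring]
    exact step_eq hρ₁ hρ₂ n (v (n+1)) key

def g2 : ℕ × ℕ → Pt 2 := fun p => ![(p.1:ℤ), (p.2:ℤ)]

lemma g2_inj : Function.Injective g2 := by
  rintro ⟨a, b⟩ ⟨c, d⟩ h
  have h0 := congrFun h 0
  have h1 := congrFun h 1
  simp [g2] at h0 h1
  simp [h0, h1]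

noncomputable def Tf (ρ : ℝ) (n : ℕ) : Finset (ℕ × ℕ) :=
  (range (n+1)).biUnion
    (fun b => (range (((n:ℤ) - b + fz ρ b).toNat + 1)).image (fun a => (a, b)))

lemma mem_Tf {ρ : ℝ} (hρ₁ : 0 < ρ) {n : ℕ} {p : ℕ × ℕ} :
    p ∈ Tf ρ n ↔ p.2 ≤ n ∧ (p.1 : ℤ) ≤ (n:ℤ) - p.2 + fz ρ (p.2 : ℤ) := by
  rcases p with ⟨a, b⟩
  have hf : 0 ≤ fz ρ (b:ℤ) := fz_nonneg hρ₁ (Int.natCast_nonneg b)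
  simp only [Tf, mem_biUnion, mem_image, mem_range]
  constructor
  · rintro ⟨b', hb', a', ha', heq⟩
    obtain ⟨rfl, rfl⟩ : a' = a ∧ b' = b := by
      simpa [Prod.ext_iff] using heq
    exact ⟨by omega, by omega⟩
  · rintro ⟨hb, ha⟩
    exact ⟨b, by omega, a, by omega, rfl⟩

lemma Sset_coe {ρ : ℝ} (hρ₁ : 0 < ρ) (n : ℕ) :
    Sset ρ n = ↑((Tf ρ n).image g2) := by
  ext x
  simp only [Finset.coe_image, Set.mem_image, Finset.mem_coe, Sset, Set.mem_setOf_eq]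
  constructor
  · rintro ⟨h0, h1, h2, h3⟩
    refine ⟨((x 0).toNat, (x 1).toNat), ?_, ?_⟩
    · rw [mem_Tf hρ₁]
      constructor
      · omega
      · have : (((x 1).toNat : ℕ) : ℤ) = x 1 := by omega
        rw [this]
        omega
    · funext i
      fin_cases i
      · show ((x 0).toNat : ℤ) = x 0
        omega
      · show ((x 1).toNat : ℤ) = x 1
        omega
  · rintro ⟨⟨a, b⟩, hp, rfl⟩
    rw [mem_Tf hρ₁] at hp
    obtain ⟨hb, ha⟩ := hp
    refine ⟨by simp [g2], by simp [g2], ?_, ?_⟩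
    · show (b : ℤ) ≤ (n : ℤ)
      omega
    · show (a : ℤ) ≤ (n:ℤ) - b + fz ρ (b : ℤ)
      exact ha

lemma card_Tf {ρ : ℝ} (n : ℕ) :
    (Tf ρ n).card = ∑ b ∈ range (n+1), (((n:ℤ) - b + fz ρ b).toNat + 1) := by
  rw [Tf, card_biUnion]
  · apply Finset.sum_congr rfl
    intro b _
    rw [Finset.card_image_of_injective _ (fun a a' h => by simpa using h), card_range]
  · intro b _ b' _ hbb
    simp only [Finset.disjoint_left, mem_image, mem_range]
    rintro ⟨a, c⟩ ⟨a1, _, h1⟩ ⟨a2, _, h2⟩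
    simp [Prod.ext_iff] at h1 h2
    omega

lemma quad_coe (n : ℕ) :
    quadGrid (n : ℤ) = ↑(((range (n+1)) ×ˢ (range (n+1))).image g2) := by
  ext x
  simp only [Finset.coe_image, Set.mem_image, Finset.mem_coe, Finset.mem_product,
    mem_range, quadGrid, Set.mem_setOf_eq, Fin.forall_fin_two]
  constructor
  · rintro ⟨⟨h0, h1⟩, h2, h3⟩
    refine ⟨((x 0).toNat, (x 1).toNat), ⟨by omega, by omega⟩, ?_⟩
    funext i
    fin_cases i
    · show ((x 0).toNat : ℤ) = x 0
      omega
    · show ((x 1).toNat : ℤ) = x 1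
      omega
  · rintro ⟨⟨a, b⟩, ⟨ha, hb⟩, rfl⟩
    constructor
    · constructor
      · simp [g2]
      · show (a : ℤ) ≤ (n : ℤ)
        omega
    · constructor
      · simp [g2]
      · show (b : ℤ) ≤ (n : ℤ)
        omega

end BurnAux

open Burning in
/-- in the quadrant grids `Q_n = [0, n]²`, the activator sequence with
`v₀ = (0,0)` and `v_n = (⌊ρn⌋, n)` when `⌊ρn⌋ − ⌊ρ(n−1)⌋ = 1`, and `v_n = •`
otherwise, has burning density `(1 + ρ)/2`. -/
theorem stmt5 (ρ : ℝ) (hρ₁ : 0 < ρ) (hρ₂ : ρ < 1)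
    (V : ℕ → Set (Pt 2)) (hV : ∀ n : ℕ, V n = quadGrid n)
    (v : ℕ → Option (Pt 2)) (hv0 : v 0 = some 0)
    (hv : ∀ n : ℕ, 1 ≤ n →
      v n = if ⌊ρ * n⌋ - ⌊ρ * ((n : ℝ) - 1)⌋ = 1
        then some ![⌊ρ * n⌋, (n : ℤ)] else none) :
    Filter.Tendsto (densitySeq V v) Filter.atTop (nhds ((1 + ρ) / 2)) := by
  have hburn := burn_eq hρ₁ hρ₂ V hV v hv0 hv
  have hD : ∀ n : ℕ, densitySeq V v n
      = (∑ b ∈ Finset.range (n+1), ((n:ℝ) - b + (fz ρ (b:ℤ) : ℝ) + 1)) / ((n:ℝ)+1)^2 := by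
    intro n
    have hB : ((burnSet V v n).ncard : ℝ)
        = ∑ b ∈ Finset.range (n+1), ((n:ℝ) - b + (fz ρ (b:ℤ) : ℝ) + 1) := by
      rw [hburn n, Sset_coe hρ₁ n, Set.ncard_coe_finset,
        Finset.card_image_of_injective _ g2_inj, card_Tf, Nat.cast_sum]
      apply Finset.sum_congr rfl
      intro b hb
      have hb' : b < n + 1 := Finset.mem_range.1 hb
      have hnn : 0 ≤ (n:ℤ) - b + fz ρ b := by
        have := fz_nonneg hρ₁ (Int.natCast_nonneg b)
        omega
      have e : ((((n:ℤ) - b + fz ρ b).toNat : ℕ) : ℤ) = (n:ℤ) - b + fz ρ b :=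
        Int.toNat_of_nonneg hnn
      have e2 : ((((n:ℤ) - b + fz ρ b).toNat : ℕ) : ℝ)
          = (n:ℝ) - b + (fz ρ (b:ℤ) : ℝ) := by
        rw [show ((((n:ℤ) - b + fz ρ b).toNat : ℕ) : ℝ)
            = (((((n:ℤ) - b + fz ρ b).toNat : ℕ) : ℤ) : ℝ) by push_cast; ring, e]
        push_cast
        ring
      push_cast
      rw [e2]
    have hVc : ((V n).ncard : ℝ) = ((n:ℝ)+1)^2 := by
      rw [hV n, quad_coe n, Set.ncard_coe_finset,
        Finset.card_image_of_injective _ g2_inj, Finset.card_product, Finset.card_range]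
      push_cast
      ring
    show ((burnSet V v n).ncard : ℝ) / ((V n).ncard : ℝ) = _
    rw [hB, hVc]
  have hg : ∀ n : ℕ, (∑ b ∈ Finset.range (n+1), (b:ℝ)) = n*(n+1)/2 := by
    intro n
    have h := Finset.sum_range_id_mul_two (n+1)
    have h2 : ((∑ i ∈ Finset.range (n+1), i : ℕ) : ℝ) * 2 = ((n+1) * n : ℕ) := by
      exact_mod_cast congrArg (fun k : ℕ => (k:ℝ)) h
    have h3 : ((∑ i ∈ Finset.range (n+1), i : ℕ) : ℝ) = ∑ b ∈ Finset.range (n+1), (b:ℝ) := by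
      push_cast; ring
    rw [h3] at h2
    push_cast at h2
    linarith
  have hsum_lo : ∀ n : ℕ, (1+ρ)/2 * ((n:ℝ)*((n:ℝ)+1))
      ≤ ∑ b ∈ Finset.range (n+1), ((n:ℝ) - b + (fz ρ (b:ℤ) : ℝ) + 1) := by
    intro n
    have hle : ∑ b ∈ Finset.range (n+1), ((n:ℝ) - b + ρ * b)
        ≤ ∑ b ∈ Finset.range (n+1), ((n:ℝ) - b + (fz ρ (b:ℤ) : ℝ) + 1) := by
      apply Finset.sum_le_sum
      intro b _
      have hlt := Int.lt_floor_add_one (ρ * ((b:ℤ):ℝ))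
      have hfz : ρ * b - 1 ≤ (fz ρ (b:ℤ) : ℝ) := by
        unfold fz
        push_cast at hlt ⊢
        linarith
      linarith
    have heq : ∑ b ∈ Finset.range (n+1), ((n:ℝ) - b + ρ * b)
        = (1+ρ)/2 * ((n:ℝ)*((n:ℝ)+1)) := by
      have h4 : ∑ b ∈ Finset.range (n+1), ((n:ℝ) - b + ρ * b)
          = ∑ b ∈ Finset.range (n+1), ((n:ℝ) + (ρ - 1) * b) := by
        apply Finset.sum_congr rfl; intro b _; ring
      rw [h4, Finset.sum_add_distrib, ← Finset.mul_sum, hg, Finset.sum_const,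
        Finset.card_range]
      push_cast
      ring
    linarith
  have hsum_hi : ∀ n : ℕ, (∑ b ∈ Finset.range (n+1), ((n:ℝ) - b + (fz ρ (b:ℤ) : ℝ) + 1))
      ≤ (1+ρ)/2 * ((n:ℝ)*((n:ℝ)+1)) + ((n:ℝ)+1) := by
    intro n
    have hle : ∑ b ∈ Finset.range (n+1), ((n:ℝ) - b + (fz ρ (b:ℤ) : ℝ) + 1)
        ≤ ∑ b ∈ Finset.range (n+1), ((n:ℝ) - b + ρ * b + 1) := by
      apply Finset.sum_le_sum
      intro b _
      have hfl := Int.floor_le (ρ * ((b:ℤ):ℝ))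
      have hfz : (fz ρ (b:ℤ) : ℝ) ≤ ρ * b := by
        unfold fz
        push_cast at hfl ⊢
        linarith
      linarith
    have heq : ∑ b ∈ Finset.range (n+1), ((n:ℝ) - b + ρ * b + 1)
        = (1+ρ)/2 * ((n:ℝ)*((n:ℝ)+1)) + ((n:ℝ)+1) := by
      have h4 : ∑ b ∈ Finset.range (n+1), ((n:ℝ) - b + ρ * b + 1)
          = ∑ b ∈ Finset.range (n+1), (((n:ℝ) + 1) + (ρ - 1) * b) := by
        apply Finset.sum_congr rfl; intro b _; ring
      rw [h4, Finset.sum_add_distrib, ← Finset.mul_sum, hg, Finset.sum_const,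
        Finset.card_range]
      push_cast
      ring
    linarith
  have hL : Filter.Tendsto (fun n : ℕ => (1+ρ)/2 * ((n:ℝ)/((n:ℝ)+1))) Filter.atTop
      (nhds ((1+ρ)/2)) := by
    have h := tendsto_natCast_div_add_atTop (1:ℝ)
    have h2 := h.const_mul ((1+ρ)/2)
    simpa using h2
  have hU : Filter.Tendsto (fun n : ℕ => (1+ρ)/2 * ((n:ℝ)/((n:ℝ)+1)) + 1/((n:ℝ)+1))
      Filter.atTop (nhds ((1+ρ)/2)) := by
    have h2 := hL.add tendsto_one_div_add_atTop_nhds_zero_nat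
    simpa using h2
  apply tendsto_of_tendsto_of_tendsto_of_le_of_le hL hU
  · intro n
    rw [hD n]
    have hpos : (0:ℝ) < ((n:ℝ)+1)^2 := by positivity
    rw [le_div_iff₀ hpos]
    calc (1+ρ)/2 * ((n:ℝ)/((n:ℝ)+1)) * ((n:ℝ)+1)^2
        = (1+ρ)/2 * ((n:ℝ)*((n:ℝ)+1)) := by field_simp
      _ ≤ _ := hsum_lo n
  · intro n
    rw [hD n]
    have hpos : (0:ℝ) < ((n:ℝ)+1)^2 := by positivity
    rw [div_le_iff₀ hpos]
    calc ∑ b ∈ Finset.range (n+1), ((n:ℝ) - b + (fz ρ (b:ℤ) : ℝ) + 1)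
        ≤ (1+ρ)/2 * ((n:ℝ)*((n:ℝ)+1)) + ((n:ℝ)+1) := hsum_hi n
      _ = ((1+ρ)/2 * ((n:ℝ)/((n:ℝ)+1)) + 1/((n:ℝ)+1)) * ((n:ℝ)+1)^2 := by
          field_simp
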